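/- Let T be a symmetric 4-tensor of dimension d and define λ_maxabs(T) = max_{‖v‖=1} |Σ_{i,j,k,ℓ} T_{ijkℓ} v_i v_j v_k v_ℓ|. Then for all indices i, j, k, ℓ ∈ {1,…,d}, λ_maxabs(T) ≥ (6/323) · |T_{ijkℓ}|. -/

import Mathlib

/-!
Polarization. For signs `ε ∈ {±1}⁴` put `v_ε = Σₘ εₘ e_{iₘ}`. Averaging `T(v_ε, …, v_ε)` against
`ε₁ε₂ε₃ε₄` kills every monomial that does not use each `εₘ` exactly once, so
`Σ_ε ε₁ε₂ε₃ε₄ T(v_ε, …, v_ε) = 4! · 2⁴ · T_{ijkℓ}` by symmetry. As `‖v_ε‖ ≤ 4`, homogeneity bounds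
each of the `2⁴` terms by `4⁴ λ_maxabs(T)`, whence `4! |T_{ijkℓ}| ≤ 4⁴ λ_maxabs(T)`, and
`4!/4⁴ = 3/32 ≥ 6/323`.
-/

open Finset
open scoped Nat

lemma abs_cast_intUnits (u : ℤˣ) : |(u : ℝ)| = 1 := by
  rw [← Int.cast_abs, Int.isUnit_iff_abs_eq.mp u.isUnit, Int.cast_one]

lemma sum_intUnits_prod_mul_prod_comp {κ : Type*} [Fintype κ] [DecidableEq κ] (g : κ → κ) :
    ∑ ε : κ → ℤˣ, (∏ m, (ε m : ℝ)) * ∏ j, (ε (g j) : ℝ)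
      = if g.Bijective then 2 ^ Fintype.card κ else 0 := by
  split_ifs with hg
  · have hsq : ∀ ε : κ → ℤˣ, (∏ m, (ε m : ℝ)) * ∏ j, (ε (g j) : ℝ) = 1 := fun ε => by
      have hperm : ∏ j, (ε (g j) : ℝ) = ∏ m, (ε m : ℝ) :=
        (Equiv.ofBijective g hg).prod_comp fun m => (ε m : ℝ)
      rw [hperm, ← prod_mul_distrib]
      exact prod_eq_one fun m _ => by norm_cast; simp [Int.units_mul_self]
    simp [hsq, Fintype.card_units_int]
  · obtain ⟨m, hm⟩ : ∃ m, ∀ j, g j ≠ m := by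
      simpa [Function.Surjective] using mt Finite.surjective_iff_bijective.mp hg
    -- flipping the sign at `m ∉ range g` negates every term
    set a : κ → ℤˣ := Pi.mulSingle m (-1)
    have hflip : ∀ ε : κ → ℤˣ, (∏ i, ((a * ε) i : ℝ)) * ∏ j, ((a * ε) (g j) : ℝ)
        = -((∏ i, (ε i : ℝ)) * ∏ j, (ε (g j) : ℝ)) := fun ε => by
      have hprod : ∏ i, (a * ε) i = -∏ i, ε i := by
        simp [a, prod_mul_distrib, prod_pi_mulSingle']
      have hfix : ∀ j, (a * ε) (g j) = ε (g j) := fun j => by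
        simp [a, Pi.mulSingle_eq_of_ne (hm j)]
      simp only [hfix]
      rw [← Int.cast_prod, ← Units.coe_prod, hprod]
      push_cast
      ring
    have := Equiv.sum_comp (Equiv.mulLeft a)
      (fun ε : κ → ℤˣ => (∏ m, (ε m : ℝ)) * ∏ j, (ε (g j) : ℝ))
    simp only [Equiv.coe_mulLeft, hflip, sum_neg_distrib] at this
    linarith

lemma sum_ite_bijective_eq_sum_perm {α M : Type*} [Fintype α] [DecidableEq α] [AddCommMonoid M]
    (F : (α → α) → M) :
    ∑ g : α → α, (if g.Bijective then F g else 0) = ∑ σ : Equiv.Perm α, F σ := by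
  rw [← sum_filter, sum_subtype _ (fun g => mem_filter_univ g) F]
  exact Fintype.sum_equiv Equiv.bijectiveEquiv _ _ fun _ => rfl

lemma prod_single_apply {ι κ : Type*} [DecidableEq ι] [Fintype κ] (x f : κ → ι) (b : κ → ℝ) :
    ∏ j, (Pi.single (x j) (b j) : ι → ℝ) (f j) = if x = f then ∏ j, b j else 0 := by
  simp only [Pi.single_apply, Fintype.prod_ite_zero, funext_iff, eq_comm]

section TensorForm

variable {ι κ : Type*} [Fintype ι] {n : ℕ}

noncomputable def tensorForm (T : (Fin n → ι) → ℝ) (v : ι → ℝ) : ℝ :=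
  ∑ f : Fin n → ι, T f * ∏ j, v (f j)

lemma tensorForm_smul (T : (Fin n → ι) → ℝ) (c : ℝ) (v : ι → ℝ) :
    tensorForm T (c • v) = c ^ n * tensorForm T v := by
  simp only [tensorForm, Pi.smul_apply, smul_eq_mul, prod_mul_distrib, prod_const, card_univ,
    Fintype.card_fin, mul_sum]
  exact sum_congr rfl fun f _ => by ring

lemma abs_tensorForm_le_mul_norm_pow (hn : n ≠ 0) {T : (Fin n → ι) → ℝ} {lam : ℝ}
    (hlam : ∀ v : ι → ℝ, ∑ i, v i ^ 2 = 1 → |tensorForm T v| ≤ lam) (w : ι → ℝ) :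
    |tensorForm T w| ≤ lam * ‖WithLp.toLp 2 w‖ ^ n := by
  rcases eq_or_ne w 0 with rfl | hw
  · have : tensorForm T 0 = 0 := by
      simpa [zero_pow hn] using tensorForm_smul T 0 (0 : ι → ℝ)
    simp [this, zero_pow hn]
  set r := ‖WithLp.toLp 2 w‖
  have hr : 0 < r := norm_pos_iff.mpr (by simpa using hw)
  have hunit : ∑ i, (r⁻¹ • w) i ^ 2 = 1 := by
    have h := EuclideanSpace.real_norm_sq_eq (WithLp.toLp 2 (r⁻¹ • w))
    simp only at h
    rw [← h, WithLp.toLp_smul, norm_smul, norm_inv, Real.norm_of_nonneg hr.le,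
      inv_mul_cancel₀ hr.ne', one_pow]
  have hw_eq : w = r • r⁻¹ • w := by rw [smul_smul, mul_inv_cancel₀ hr.ne', one_smul]
  calc |tensorForm T w| = r ^ n * |tensorForm T (r⁻¹ • w)| := by
        conv_lhs => rw [hw_eq, tensorForm_smul, abs_mul, abs_of_pos (pow_pos hr n)]
    _ ≤ r ^ n * lam := by gcongr; exact hlam _ hunit
    _ = lam * r ^ n := mul_comm _ _

lemma tensorForm_sum_single [DecidableEq ι] [Fintype κ] (T : (Fin n → ι) → ℝ) (x : κ → ι)
    (a : κ → ℝ) :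
    tensorForm T (∑ m, Pi.single (x m) (a m)) = ∑ g : Fin n → κ, T (x ∘ g) * ∏ j, a (g j) := by
  simp only [tensorForm, Finset.sum_apply, Fintype.prod_sum, prod_single_apply, mul_sum]
  rw [sum_comm]
  exact sum_congr rfl fun g _ => by simp [mul_ite, Function.comp_def]

noncomputable def signVector [DecidableEq ι] [Fintype κ] (x : κ → ι) (ε : κ → ℤˣ) : ι → ℝ :=
  ∑ m, Pi.single (x m) (ε m : ℝ)

lemma norm_toLp_signVector_le [DecidableEq ι] [Fintype κ] (x : κ → ι) (ε : κ → ℤˣ) :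
    ‖WithLp.toLp 2 (signVector x ε)‖ ≤ Fintype.card κ := by
  calc ‖WithLp.toLp 2 (signVector x ε)‖
      ≤ ∑ m, ‖WithLp.toLp 2 (Pi.single (x m) (ε m : ℝ) : ι → ℝ)‖ := by
        rw [signVector, WithLp.toLp_sum]
        exact norm_sum_le _ _
    _ = Fintype.card κ := by simp [abs_cast_intUnits]

lemma sum_sign_mul_tensorForm_signVector [DecidableEq ι] {T : (Fin n → ι) → ℝ}
    (hsym : ∀ (p : Equiv.Perm (Fin n)) (f : Fin n → ι), T (f ∘ p) = T f) (x : Fin n → ι) :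
    ∑ ε : Fin n → ℤˣ, (∏ m, (ε m : ℝ)) * tensorForm T (signVector x ε) = n ! * 2 ^ n * T x := by
  calc ∑ ε : Fin n → ℤˣ, (∏ m, (ε m : ℝ)) * tensorForm T (signVector x ε)
      = ∑ g : Fin n → Fin n,
          T (x ∘ g) * ∑ ε : Fin n → ℤˣ, (∏ m, (ε m : ℝ)) * ∏ j, (ε (g j) : ℝ) := by
        simp only [signVector, tensorForm_sum_single, mul_sum]
        rw [sum_comm]
        exact sum_congr rfl fun g _ => sum_congr rfl fun ε _ => by ring
    _ = ∑ g : Fin n → Fin n, if g.Bijective then T (x ∘ g) * 2 ^ n else 0 := by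
        simp only [sum_intUnits_prod_mul_prod_comp, Fintype.card_fin, mul_ite, mul_zero]
    _ = ∑ σ : Equiv.Perm (Fin n), T (x ∘ σ) * 2 ^ n := sum_ite_bijective_eq_sum_perm _
    _ = n ! * 2 ^ n * T x := by
        simp only [hsym, sum_const, card_univ, Fintype.card_perm, Fintype.card_fin, nsmul_eq_mul]
        ring

theorem factorial_mul_abs_le_pow_mul (hn : n ≠ 0) {T : (Fin n → ι) → ℝ} {lam : ℝ}
    (hsym : ∀ (p : Equiv.Perm (Fin n)) (f : Fin n → ι), T (f ∘ p) = T f)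
    (hlam : ∀ v : ι → ℝ, ∑ i, v i ^ 2 = 1 → |tensorForm T v| ≤ lam) (hlam0 : 0 ≤ lam)
    (x : Fin n → ι) :
    n ! * |T x| ≤ n ^ n * lam := by
  classical
  have hterm (ε : Fin n → ℤˣ) :
      |(∏ m, (ε m : ℝ)) * tensorForm T (signVector x ε)| ≤ n ^ n * lam := by
    rw [abs_mul, abs_prod]
    simp only [abs_cast_intUnits, prod_const_one, one_mul]
    calc |tensorForm T (signVector x ε)| ≤ lam * ‖WithLp.toLp 2 (signVector x ε)‖ ^ n :=
          abs_tensorForm_le_mul_norm_pow hn hlam _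
      _ ≤ lam * n ^ n := by
          gcongr
          simpa using norm_toLp_signVector_le x ε
      _ = n ^ n * lam := mul_comm _ _
  have hsum := (abs_sum_le_sum_abs _ univ).trans (sum_le_sum fun ε (_ : ε ∈ univ) => hterm ε)
  rw [sum_sign_mul_tensorForm_signVector hsym, sum_const, card_univ, Fintype.card_fun,
    Fintype.card_units_int, Fintype.card_fin, nsmul_eq_mul, abs_mul,
    abs_of_pos (by positivity)] at hsum
  push_cast at hsum
  nlinarith [pow_pos (two_pos : (0 : ℝ) < 2) n]

end TensorForm

/-- For a symmetric 4-tensor T with λ_maxabs(T) = max_{‖v‖=1} |Σ T_{ijkℓ} v_i v_j v_k v_ℓ|,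
every entry satisfies λ_maxabs(T) ≥ (6/323) ⋅ |T_{ijkℓ}|. -/
theorem symm4_lambda_maxabs_ge_any_entry
    (d : ℕ) (T : (Fin 4 → Fin d) → ℝ)
    (hsym : ∀ (p : Equiv.Perm (Fin 4)) (f : Fin 4 → Fin d), T (f ∘ p) = T f)
    (lamMaxAbs : ℝ)
    (hmax : IsGreatest {x : ℝ | ∃ v : Fin d → ℝ, (∑ i, v i ^ 2 = 1)
        ∧ x = |∑ f : Fin 4 → Fin d, T f * ∏ j, v (f j)|} lamMaxAbs)
    (i j k l : Fin d) :
    (6 / 323 : ℝ) * |T ![i, j, k, l]| ≤ lamMaxAbs := by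
  obtain ⟨⟨v, -, rfl⟩, hle⟩ := hmax
  have h := factorial_mul_abs_le_pow_mul four_ne_zero hsym (fun w hw => hle ⟨w, hw, rfl⟩)
    (abs_nonneg _) ![i, j, k, l]
  norm_num [Nat.factorial] at h
  linarith [abs_nonneg (T ![i, j, k, l])]
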